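/- Fix d ≥ 3 and define u_n(d) for n ≥ 1 by u_1(d) = 1 and the recurrence ((2n-3)!!)^{d-1} + ∑_{k=2}^{n} C(n-1,k-1)·((2n-2k-1)!!/k!)^{d-1}·2^k·u_k(d) = ((2n-1)!!)^{d-1} for n > 1. Then u_n(d) ~ 2^{-dn}·((2n)!)^{d-1} as n → ∞. -/

import Mathlib

open Nat Filter

/-- `(2n-1)!! = 1·3·5⋯(2n-1)`, the product of the first `n` odd positive integers. -/
def oddDF (n : ℕ) : ℕ := ∏ i ∈ Finset.range n, (2 * i + 1)

/-!
Write `u n = w n · (n! (2n-1)!!)^(d-1) / 2^n`; since `(2n)! = 2^n n! (2n-1)!!` the claim is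
`w n → 1`. In terms of `w` the recurrence says that `(w n - 1) · ((2n-1)!!)^(d-1)` equals minus
`((2n-3)!!)^(d-1)` plus a combination of the `w k`, `2 ≤ k < n`. The identity
`C(2n,2k) (2k-1)!! (2n-2k-1)!! = C(n,k) (2n-1)!!` together with `C(n,k)² ≤ C(2n,2k)` bounds the
`k`-th coefficient by `((2n-1)!!)^(d-1) / C(n,k)` as soon as `d ≥ 3`, so
`|w n - 1| ≤ 1/n + ∑_{2 ≤ k < n} |w k| / C(n,k)`. As `∑_{2 ≤ k < n} 1 / C(n,k) ≤ 3/n`, this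
forces `w` to be bounded, and then `w n → 1`.
-/

open Finset Topology

lemma oddDF_zero : oddDF 0 = 1 := rfl

lemma oddDF_succ (n : ℕ) : oddDF (n + 1) = oddDF n * (2 * n + 1) :=
  prod_range_succ _ _

lemma oddDF_pos (n : ℕ) : 0 < oddDF n :=
  prod_pos fun _ _ => succ_pos _

lemma factorial_two_mul_eq (n : ℕ) : (2 * n)! = 2 ^ n * n ! * oddDF n := by
  induction n with
  | zero => rfl
  | succ n ih =>
    rw [show 2 * (n + 1) = 2 * n + 1 + 1 by ring, factorial_succ, factorial_succ, ih, oddDF_succ,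
      factorial_succ]
    ring

lemma choose_two_mul_mul_oddDF {n k : ℕ} (hk : k ≤ n) :
    (2 * n).choose (2 * k) * (oddDF k * oddDF (n - k)) = n.choose k * oddDF n := by
  have h2n : (2 * n).choose (2 * k) * (2 * k)! * (2 * (n - k))! = (2 * n)! := by
    rw [mul_tsub, ← choose_mul_factorial_mul_factorial (by omega : 2 * k ≤ 2 * n)]
  have hn : n.choose k * k ! * (n - k)! = n ! := choose_mul_factorial_mul_factorial hk
  have h2 : 2 ^ n = 2 ^ k * 2 ^ (n - k) := by rw [← pow_add, Nat.add_sub_cancel' hk]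
  apply Nat.eq_of_mul_eq_mul_right (by positivity : 0 < 2 ^ n * (k ! * (n - k)!))
  rw [factorial_two_mul_eq, factorial_two_mul_eq, factorial_two_mul_eq, ← hn, h2] at h2n
  rw [h2]
  linear_combination h2n

lemma choose_sq_le_choose_two_mul (n k : ℕ) : n.choose k ^ 2 ≤ (2 * n).choose (2 * k) := by
  rw [two_mul n, add_choose_eq, sq]
  exact single_le_sum (f := fun ij => n.choose ij.1 * n.choose ij.2) (fun _ _ => zero_le _)
    (mem_antidiagonal.2 (two_mul k).symm : (k, k) ∈ antidiagonal (2 * k))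

lemma choose_le_choose_of_le_of_two_mul_le {n r k : ℕ} (hrk : r ≤ k) (hk : 2 * k ≤ n) :
    n.choose r ≤ n.choose k := by
  induction k, hrk using Nat.le_induction with
  | base => rfl
  | succ m _ ih => exact (ih (by omega)).trans (choose_le_succ_of_lt_half_left (by omega))

lemma choose_two_le_choose {n k : ℕ} (hk : 2 ≤ k) (hkn : k + 2 ≤ n) :
    n.choose 2 ≤ n.choose k := by
  rcases le_or_gt (2 * k) n with h | h
  · exact choose_le_choose_of_le_of_two_mul_le hk h
  · rw [← choose_symm (by omega : k ≤ n)]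
    exact choose_le_choose_of_le_of_two_mul_le (by omega) (by omega)

lemma choose_mul_oddDF_mul_oddDF_pow_mul_choose_le {e n k : ℕ} (he : 2 ≤ e) (hk : 1 ≤ k)
    (hkn : k ≤ n) :
    (n - 1).choose (k - 1) * (oddDF (n - k) * oddDF k) ^ e * n.choose k ≤ oddDF n ^ e := by
  set c := n.choose k
  set C := (2 * n).choose (2 * k)
  have hc : 0 < c := choose_pos hkn
  have hpascal : (n - 1).choose (k - 1) ≤ c := by
    have := choose_succ_succ' (n - 1) (k - 1)
    rw [Nat.sub_add_cancel (by omega), Nat.sub_add_cancel hk] at this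
    omega
  have hcC : c ^ (e + 2) ≤ C ^ e :=
    calc c ^ (e + 2) ≤ c ^ (2 * e) := pow_le_pow_right₀ hc (by omega)
      _ = (c ^ 2) ^ e := by rw [pow_mul]
      _ ≤ C ^ e := pow_le_pow_left₀ (zero_le _) (choose_sq_le_choose_two_mul n k) e
  have hC : 0 < C := choose_pos (by omega)
  apply Nat.le_of_mul_le_mul_right (c := C ^ e) _ (by positivity)
  calc (n - 1).choose (k - 1) * (oddDF (n - k) * oddDF k) ^ e * c * C ^ e
      = (n - 1).choose (k - 1) * c * (C * (oddDF k * oddDF (n - k))) ^ e := by ring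
    _ = (n - 1).choose (k - 1) * c ^ (e + 1) * oddDF n ^ e := by
        rw [choose_two_mul_mul_oddDF hkn]; ring
    _ ≤ c * c ^ (e + 1) * oddDF n ^ e := by gcongr
    _ = c ^ (e + 2) * oddDF n ^ e := by ring
    _ ≤ C ^ e * oddDF n ^ e := by gcongr
    _ = oddDF n ^ e * C ^ e := mul_comm _ _

lemma succ_mul_oddDF_pow_le {e : ℕ} (he : 1 ≤ e) (m : ℕ) :
    (m + 1) * oddDF m ^ e ≤ oddDF (m + 1) ^ e := by
  rw [oddDF_succ, mul_pow, mul_comm]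
  gcongr
  calc m + 1 ≤ 2 * m + 1 := by omega
    _ ≤ (2 * m + 1) ^ e := le_self_pow₀ (by omega) (by omega)

lemma sum_inv_choose_le (n : ℕ) : ∑ k ∈ Ico 2 n, (n.choose k : ℝ)⁻¹ ≤ 3 / n := by
  rcases lt_or_ge n 3 with hn | hn
  · rw [Ico_eq_empty (by omega), sum_empty]
    positivity
  obtain ⟨m, rfl⟩ : ∃ m, n = m + 1 := ⟨n - 1, by omega⟩
  have hmiddle : ∀ k ∈ Ico 2 m, ((m + 1).choose k : ℝ)⁻¹ ≤ ((m + 1).choose 2 : ℝ)⁻¹ :=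
    fun k hk => by
      have := mem_Ico.1 hk
      gcongr
      · exact_mod_cast choose_pos (by omega)
      · exact choose_two_le_choose this.1 (by omega)
  calc ∑ k ∈ Ico 2 (m + 1), ((m + 1).choose k : ℝ)⁻¹
      = ∑ k ∈ Ico 2 m, ((m + 1).choose k : ℝ)⁻¹ + ((m + 1).choose m : ℝ)⁻¹ :=
        sum_Ico_succ_top (by omega) _
    _ ≤ (m - 2 : ℕ) • ((m + 1).choose 2 : ℝ)⁻¹ + ((m + 1 : ℕ) : ℝ)⁻¹ := by
        rw [choose_succ_self_right, ← card_Ico 2 m]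
        gcongr
        exact sum_le_card_nsmul _ _ _ hmiddle
    _ ≤ 3 / (m + 1 : ℕ) := by
        rw [nsmul_eq_mul, cast_choose_two, cast_sub (by omega)]
        push_cast
        rw [add_sub_cancel_right, inv_div, ← sub_nonneg]
        have hm : (m : ℝ) ≠ 0 := mod_cast (by omega : m ≠ 0)
        have : 3 / ((m : ℝ) + 1) - ((m - 2) * (2 / ((m + 1) * m)) + ((m : ℝ) + 1)⁻¹)
            = 4 / ((m + 1) * m) := by
          field_simp
          ring
        rw [this]
        positivity

lemma tendsto_sum_inv_choose :
    Tendsto (fun n => ∑ k ∈ Ico 2 n, (n.choose k : ℝ)⁻¹) atTop (𝓝 0) :=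
  squeeze_zero (fun _ => sum_nonneg fun _ _ => by positivity) sum_inv_choose_le
    (tendsto_const_div_atTop_nhds_zero_nat 3)

section RecursiveBound

variable {w a : ℕ → ℝ} {b : ℕ → ℕ → ℝ} {s : ℕ → Finset ℕ}

lemma sum_mul_abs_le_mul_sum {n : ℕ} {M : ℝ} (hb : ∀ k ∈ s n, 0 ≤ b n k)
    (hM : ∀ k ∈ s n, |w k| ≤ M) : ∑ k ∈ s n, b n k * |w k| ≤ M * ∑ k ∈ s n, b n k := by
  rw [mul_sum]
  exact sum_le_sum fun k hk => by
    rw [mul_comm M]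
    exact mul_le_mul_of_nonneg_left (hM k hk) (hb k hk)

lemma exists_abs_le_of_abs_sub_one_le (hs : ∀ n, ∀ k ∈ s n, k < n)
    (hb : ∀ n, ∀ k ∈ s n, 0 ≤ b n k) (ha : Tendsto a atTop (𝓝 0))
    (hbs : Tendsto (fun n => ∑ k ∈ s n, b n k) atTop (𝓝 0))
    (hw : ∀ᶠ n in atTop, |w n - 1| ≤ a n + ∑ k ∈ s n, b n k * |w k|) :
    ∃ M, ∀ n, |w n| ≤ M := by
  obtain ⟨N, hN⟩ := eventually_atTop.1 <|
    hw.and <| (ha.eventually (ge_mem_nhds one_pos)).and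
      (hbs.eventually (ge_mem_nhds one_half_pos))
  refine ⟨4 + ∑ k ∈ range N, |w k|, fun n => ?_⟩
  induction n using Nat.strong_induction_on with
  | _ n ih =>
    rcases lt_or_ge n N with hn | hn
    · have := single_le_sum (f := fun k => |w k|) (fun _ _ => abs_nonneg _) (mem_range.2 hn)
      linarith
    obtain ⟨hwn, han, hbn⟩ := hN n hn
    set M := 4 + ∑ k ∈ range N, |w k|
    have hM : 4 ≤ M := le_add_of_nonneg_right (sum_nonneg fun _ _ => abs_nonneg _)
    have hsum : ∑ k ∈ s n, b n k * |w k| ≤ M * ∑ k ∈ s n, b n k :=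
      sum_mul_abs_le_mul_sum (hb n) fun k hk => ih k (hs n k hk)
    have := abs_sub_abs_le_abs_sub (w n) 1
    rw [abs_one] at this
    nlinarith

lemma tendsto_one_of_abs_sub_one_le (hs : ∀ n, ∀ k ∈ s n, k < n)
    (hb : ∀ n, ∀ k ∈ s n, 0 ≤ b n k) (ha : Tendsto a atTop (𝓝 0))
    (hbs : Tendsto (fun n => ∑ k ∈ s n, b n k) atTop (𝓝 0))
    (hw : ∀ᶠ n in atTop, |w n - 1| ≤ a n + ∑ k ∈ s n, b n k * |w k|) :
    Tendsto w atTop (𝓝 1) := by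
  obtain ⟨M, hM⟩ := exists_abs_le_of_abs_sub_one_le hs hb ha hbs hw
  rw [← tendsto_sub_nhds_zero_iff]
  refine squeeze_zero_norm' ?_ (by simpa using ha.add (hbs.const_mul M))
  filter_upwards [hw] with n hn
  calc |w n - 1| ≤ a n + ∑ k ∈ s n, b n k * |w k| := hn
    _ ≤ a n + M * ∑ k ∈ s n, b n k :=
        add_le_add_right (sum_mul_abs_le_mul_sum (hb n) fun k _ => hM k) _

end RecursiveBound

/-- `u n` measured against `(n! (2n-1)!!)^e / 2^n`, which equals `((2n)!)^e / 2^((e+1)n)`. -/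
noncomputable def normalized (e : ℕ) (u : ℕ → ℝ) (n : ℕ) : ℝ :=
  u n * 2 ^ n / ((n ! : ℝ) * oddDF n) ^ e

lemma div_eq_normalized {d : ℕ} (hd : 1 ≤ d) (u : ℕ → ℝ) (n : ℕ) :
    u n / (((2 : ℝ) ^ (d * n))⁻¹ * ((2 * n)! : ℝ) ^ (d - 1)) = normalized (d - 1) u n := by
  obtain ⟨e, rfl⟩ : ∃ e, d = e + 1 := ⟨d - 1, by omega⟩
  have : (0 : ℝ) < oddDF n := mod_cast oddDF_pos n
  rw [normalized, Nat.add_sub_cancel, factorial_two_mul_eq]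
  push_cast
  field_simp
  ring

def SolvesRecurrence (e : ℕ) (u : ℕ → ℝ) : Prop :=
  ∀ n : ℕ, 1 < n →
    (oddDF (n - 1) : ℝ) ^ e +
      ∑ k ∈ Icc 2 n,
        ((n - 1).choose (k - 1) : ℝ) * ((oddDF (n - k) : ℝ) / (k ! : ℝ)) ^ e * 2 ^ k * u k =
      (oddDF n : ℝ) ^ e

section Recurrence

variable {e : ℕ} {u : ℕ → ℝ}

lemma normalized_sub_one_mul (hrec : SolvesRecurrence e u) {n : ℕ} (hn : 2 ≤ n) :
    (normalized e u n - 1) * (oddDF n : ℝ) ^ e =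
      -((oddDF (n - 1) : ℝ) ^ e + ∑ k ∈ Ico 2 n,
        ((n - 1).choose (k - 1) : ℝ) * ((oddDF (n - k) : ℝ) * oddDF k) ^ e * normalized e u k) := by
  have hterm : ∀ k ∈ Icc 2 n,
      ((n - 1).choose (k - 1) : ℝ) * ((oddDF (n - k) : ℝ) / (k ! : ℝ)) ^ e * 2 ^ k * u k =
        ((n - 1).choose (k - 1) : ℝ) * ((oddDF (n - k) : ℝ) * oddDF k) ^ e * normalized e u k :=
    fun k _ => by
      have : (0 : ℝ) < oddDF k := mod_cast oddDF_pos k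
      rw [normalized, div_pow, mul_pow, mul_pow]
      field_simp
  have h := hrec n hn
  rw [sum_congr rfl hterm, ← Ico_add_one_right_eq_Icc, sum_Ico_succ_top (by omega)] at h
  simp only [Nat.sub_self, choose_self, oddDF_zero, cast_one, one_mul] at h
  linear_combination h

lemma abs_normalized_sub_one_le (he : 2 ≤ e) (hrec : SolvesRecurrence e u) {n : ℕ}
    (hn : 2 ≤ n) :
    |normalized e u n - 1| ≤
      (n : ℝ)⁻¹ + ∑ k ∈ Ico 2 n, (n.choose k : ℝ)⁻¹ * |normalized e u k| := by
  have hA : (0 : ℝ) < oddDF n ^ e := pow_pos (mod_cast oddDF_pos n) e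
  have hfirst : (oddDF (n - 1) : ℝ) ^ e ≤ (n : ℝ)⁻¹ * oddDF n ^ e := by
    rw [inv_mul_eq_div, le_div_iff₀ (by positivity), mul_comm]
    have := succ_mul_oddDF_pow_le (by omega : 1 ≤ e) (n - 1)
    rw [Nat.sub_add_cancel (by omega)] at this
    exact_mod_cast this
  have hcoeff : ∀ k ∈ Ico 2 n,
      ((n - 1).choose (k - 1) : ℝ) * ((oddDF (n - k) : ℝ) * oddDF k) ^ e ≤
        (n.choose k : ℝ)⁻¹ * oddDF n ^ e :=
    fun k hk => by
      have hk := mem_Ico.1 hk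
      rw [inv_mul_eq_div, le_div_iff₀ (mod_cast choose_pos (by omega))]
      exact_mod_cast choose_mul_oddDF_mul_oddDF_pow_mul_choose_le he (by omega) (by omega)
  refine le_of_mul_le_mul_right ?_ hA
  calc |normalized e u n - 1| * oddDF n ^ e
      = |(oddDF (n - 1) : ℝ) ^ e + ∑ k ∈ Ico 2 n,
          ((n - 1).choose (k - 1) : ℝ) * ((oddDF (n - k) : ℝ) * oddDF k) ^ e *
            normalized e u k| := by
        rw [← abs_of_pos hA, ← abs_mul, normalized_sub_one_mul hrec hn, abs_neg]
    _ ≤ (oddDF (n - 1) : ℝ) ^ e + ∑ k ∈ Ico 2 n,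
          ((n - 1).choose (k - 1) : ℝ) * ((oddDF (n - k) : ℝ) * oddDF k) ^ e *
            |normalized e u k| := by
        refine (abs_add_le _ _).trans (add_le_add (abs_of_nonneg (by positivity)).le ?_)
        refine (abs_sum_le_sum_abs _ _).trans (sum_le_sum fun k _ => ?_)
        rw [abs_mul, abs_of_nonneg (by positivity)]
    _ ≤ (n : ℝ)⁻¹ * oddDF n ^ e +
          ∑ k ∈ Ico 2 n, (n.choose k : ℝ)⁻¹ * oddDF n ^ e * |normalized e u k| :=
        add_le_add hfirst
          (sum_le_sum fun k hk => mul_le_mul_of_nonneg_right (hcoeff k hk) (abs_nonneg _))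
    _ = ((n : ℝ)⁻¹ + ∑ k ∈ Ico 2 n, (n.choose k : ℝ)⁻¹ * |normalized e u k|) *
          oddDF n ^ e := by
        rw [add_mul, sum_mul]
        exact congrArg _ (sum_congr rfl fun k _ => by ring)

end Recurrence

theorem stmt12_general (d : ℕ) (hd : 3 ≤ d) (u : ℕ → ℝ)
    (hrec : ∀ n : ℕ, 1 < n →
      (oddDF (n - 1) : ℝ) ^ (d - 1) +
        ∑ k ∈ Finset.Icc 2 n,
          ((n - 1).choose (k - 1) : ℝ) * ((oddDF (n - k) : ℝ) / (k ! : ℝ)) ^ (d - 1) *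
            2 ^ k * u k =
        (oddDF n : ℝ) ^ (d - 1)) :
    Tendsto
      (fun n : ℕ => u n / (((2 : ℝ) ^ (d * n))⁻¹ * ((2 * n)! : ℝ) ^ (d - 1)))
      atTop (nhds 1) := by
  have hnormalized : Tendsto (normalized (d - 1) u) atTop (𝓝 1) :=
    tendsto_one_of_abs_sub_one_le (s := fun n => Ico 2 n) (b := fun n k => (n.choose k : ℝ)⁻¹)
      (fun _ _ hk => (mem_Ico.1 hk).2) (fun _ _ _ => by positivity)
      tendsto_inv_atTop_nhds_zero_nat tendsto_sum_inv_choose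
      (eventually_atTop.2 ⟨2, fun _ hn => abs_normalized_sub_one_le (by omega) hrec hn⟩)
  simpa only [div_eq_normalized (by omega : 1 ≤ d)] using hnormalized

theorem stmt12 (d : ℕ) (hd : 3 ≤ d) (u : ℕ → ℝ) (hu1 : u 1 = 1)
    (hrec : ∀ n : ℕ, 1 < n →
      (oddDF (n - 1) : ℝ) ^ (d - 1) +
        ∑ k ∈ Finset.Icc 2 n,
          ((n - 1).choose (k - 1) : ℝ) * ((oddDF (n - k) : ℝ) / (k ! : ℝ)) ^ (d - 1) *
            2 ^ k * u k =
        (oddDF n : ℝ) ^ (d - 1)) :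
    Tendsto
      (fun n : ℕ => u n / (((2 : ℝ) ^ (d * n))⁻¹ * ((2 * n)! : ℝ) ^ (d - 1)))
      atTop (nhds 1) :=
  stmt12_general d hd u hrec
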